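/- arXiv:2602.17346 — 2 statements merged into one kernel-verified Lean document; each statement's English description precedes it below -/
import Mathlib

section
/- Let V be a finite nonempty set and x̃ ∈ X̃_V. Define the partial characteristic function cl(x̃) by cl(x̃)^{-1}(1) := {pq ∈ P_V : there is a directed path from p to q in (V, x̃^{-1}(1))} and cl(x̃)^{-1}(0) := {pq ∈ P_V : ∃ p'q' ∈ x̃^{-1}(0) such that in (V, x̃^{-1}(1)) there is a (possibly trivial) directed path from p' to p and a (possibly trivial) directed path from q to q'}, with cl(x̃) undefined on all other pairs. Then cl(x̃) is the unique maximally specific partial characteristic function whose set of completions equals X_V[x̃], i.e., cl(x̃) is maximally specific, X_V[cl(x̃)] = X_V[x̃], and any maximally specific x̃' ∈ X̃_V with X_V[x̃'] = X_V[x̃] equals cl(x̃). -/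
open scoped Classical

/-- The set of ordered pairs of distinct elements of `V`. -/
def PV (V : Type*) : Set (V × V) := {pq | pq.1 ≠ pq.2}

/-- Characteristic functions of preorders on `V`: values in `{0,1}` on pairs of distinct
elements, value `1` on the diagonal (by convention), and the transitivity inequalities. -/
def XV (V : Type*) : Set (V × V → ℝ) :=
  {x | (∀ a : V, x (a, a) = 1) ∧
       (∀ pq : V × V, pq.1 ≠ pq.2 → x pq = 0 ∨ x pq = 1) ∧
       (∀ p q r : V, p ≠ q → p ≠ r → q ≠ r → x (p, q) + x (q, r) - x (p, r) ≤ 1)}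

/-- Completions of the partial characteristic function with `x̃⁻¹(0) = E0` and `x̃⁻¹(1) = E1`. -/
def completions {V : Type*} (E0 E1 : Set (V × V)) : Set (V × V → ℝ) :=
  {x | x ∈ XV V ∧ (∀ e ∈ E0, x e = 0) ∧ (∀ e ∈ E1, x e = 1)}

/-- There is a (possibly trivial) directed path from `p` to `q` in the digraph `(V, E)`. -/
def reach {V : Type*} (E : Set (V × V)) (p q : V) : Prop :=
  Relation.ReflTransGen (fun a b => (a, b) ∈ E) p q

/-- Transitive closure of an edge set. -/
def tc {V : Type*} (E : Set (V × V)) : Set (V × V) :=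
  {pq | pq ∈ PV V ∧ reach E pq.1 pq.2}

/-- A pair is decided by the partial characteristic function `(E0, E1)`. -/
def decidedPair {V : Type*} (E0 E1 : Set (V × V)) (pq : V × V) : Prop :=
  ∀ x ∈ completions E0 E1, ∀ x' ∈ completions E0 E1, x pq = x' pq

/-- The partial characteristic function `(E0, E1)` is maximally specific. -/
def maxSpecific {V : Type*} (E0 E1 : Set (V × V)) : Prop :=
  {pq | pq ∈ PV V ∧ decidedPair E0 E1 pq} = E0 ∪ E1

/-- Objective function of the preordering problem. -/
noncomputable def phi {V : Type*} [Fintype V] (c x : V × V → ℝ) : ℝ :=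
  ∑ pq ∈ Finset.univ.filter (fun pq : V × V => pq.1 ≠ pq.2), c pq * x pq

/-- `δ(U, V \ U)`. -/
def dicut {V : Type*} (U : Set V) : Set (V × V) := {pq | pq.1 ∈ U ∧ pq.2 ∉ U}

/-- Elementary dicut map. -/
noncomputable def sigmaCut {V : Type*} (U : Set V) (x : V × V → ℝ) : V × V → ℝ :=
  fun pq => if pq.1 ∈ U ∧ pq.2 ∉ U then 0 else x pq

/-- Elementary join map. -/
noncomputable def sigmaJoin {V : Type*} (i j : V) (x : V × V → ℝ) : V × V → ℝ :=
  fun pq => if x (pq.1, i) = 1 ∧ x (j, pq.2) = 1 then 1 else x pq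

/-- `P_{ab}[σ]`: pairs whose value can change from `a` to `b` under `σ`. -/
def Pmove {V : Type*} (E0 E1 : Set (V × V)) (σ : (V × V → ℝ) → (V × V → ℝ)) (a b : ℝ) :
    Set (V × V) :=
  {e | e ∈ PV V ∧ ∃ x ∈ completions E0 E1, x e = a ∧ σ x e = b}

/-- Restriction of a set of pairs to `U × U`. -/
def resSet {V : Type*} (U : Set V) (E : Set (V × V)) : Set (↥U × ↥U) :=
  {pq | ((pq.1 : V), (pq.2 : V)) ∈ E}

/-- `cl(x̃)⁻¹(1)`. -/
def cl1 {V : Type*} (E1 : Set (V × V)) : Set (V × V) :=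
  {pq | pq ∈ PV V ∧ reach E1 pq.1 pq.2}

/-- `cl(x̃)⁻¹(0)`. -/
def cl0 {V : Type*} (E0 E1 : Set (V × V)) : Set (V × V) :=
  {pq | pq ∈ PV V ∧ ∃ e ∈ E0, reach E1 e.1 pq.1 ∧ reach E1 pq.2 e.2}


section helpers
variable {V : Type*}

lemma xv_trans {x : V × V → ℝ} (hx : x ∈ XV V) {a b c : V}
    (hab : x (a, b) = 1) (hbc : x (b, c) = 1) : x (a, c) = 1 := by
  obtain ⟨hd, h01, ht⟩ := hx
  by_cases h1 : a = b
  · subst h1; exact hbc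
  by_cases h2 : b = c
  · subst h2; exact hab
  by_cases h3 : a = c
  · subst h3; exact hd a
  have := ht a b c h1 h3 h2
  rcases h01 (a, c) h3 with h | h
  · simp only [h] at this; linarith
  · exact h

lemma reach_one {E0 E1 : Set (V × V)} {x : V × V → ℝ} (hx : x ∈ completions E0 E1)
    {p q : V} (h : reach E1 p q) : x (p, q) = 1 := by
  induction h with
  | refl => exact hx.1.1 p
  | tail _ hbc ih => exact xv_trans hx.1 ih (hx.2.2 _ hbc)

lemma mem_cl1_one {E0 E1 : Set (V × V)} {x : V × V → ℝ} (hx : x ∈ completions E0 E1)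
    {e : V × V} (he : e ∈ cl1 E1) : x e = 1 := reach_one hx he.2

lemma mem_cl0_zero {E0 E1 : Set (V × V)} {x : V × V → ℝ} (hx : x ∈ completions E0 E1)
    {e : V × V} (he : e ∈ cl0 E0 E1) : x e = 0 := by
  obtain ⟨hePV, e', he', h1, h2⟩ := he
  rcases hx.1.2.1 e hePV with h | h
  · exact h
  · exfalso
    have ha := reach_one hx h1
    have hb := reach_one hx h2
    have h' : x (e.1, e.2) = 1 := h
    have hc : x (e'.1, e.2) = 1 := xv_trans hx.1 ha h'
    have hd : x (e'.1, e'.2) = 1 := xv_trans hx.1 hc hb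
    have h0 : x (e'.1, e'.2) = 0 := hx.2.1 e' he'
    linarith

/-- Indicator function of a relation. -/
noncomputable def ind (R : V → V → Prop) : V × V → ℝ :=
  fun pq => if R pq.1 pq.2 then 1 else 0

lemma ind_mem_XV {R : V → V → Prop} (hr : ∀ a, R a a)
    (ht : ∀ a b c, R a b → R b c → R a c) : ind R ∈ XV V := by
  refine ⟨fun a => if_pos (hr a), fun pq _ => ?_, fun p q r _ _ _ => ?_⟩
  · unfold ind; split_ifs <;> simp
  · have htr := ht p q r
    simp only [ind]
    split_ifs with h1 h2 h3 <;>
      first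
        | (exfalso; exact ‹¬ R p r› (htr h1 h2))
        | norm_num

lemma not_reach_E0 {E0 E1 : Set (V × V)} (hne : (completions E0 E1).Nonempty)
    {e : V × V} (he : e ∈ E0) : ¬ reach E1 e.1 e.2 := by
  intro h
  obtain ⟨x, hx⟩ := hne
  have h1 : x (e.1, e.2) = 1 := reach_one hx h
  have h0 : x (e.1, e.2) = 0 := hx.2.1 e he
  linarith

lemma ind_reach_mem {E0 E1 : Set (V × V)} (hne : (completions E0 E1).Nonempty) :
    ind (reach E1) ∈ completions E0 E1 := by
  refine ⟨ind_mem_XV (fun a => Relation.ReflTransGen.refl)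
      (fun a b c hab hbc => hab.trans hbc), fun e he => ?_, fun e he => ?_⟩
  · exact if_neg (not_reach_E0 hne he)
  · exact if_pos (Relation.ReflTransGen.single he)

lemma completions_cl {E0 E1 : Set (V × V)} (hE0 : E0 ⊆ PV V) (hE1 : E1 ⊆ PV V) :
    completions (cl0 E0 E1) (cl1 E1) = completions E0 E1 := by
  ext x
  constructor
  · rintro ⟨hxv, h0, h1⟩
    refine ⟨hxv, fun e he => h0 e ⟨hE0 he, e, he, .refl, .refl⟩,
      fun e he => h1 e ⟨hE1 he, Relation.ReflTransGen.single he⟩⟩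
  · intro hx
    exact ⟨hx.1, fun e he => mem_cl0_zero hx he, fun e he => mem_cl1_one hx he⟩

lemma maxSpecific_cl {E0 E1 : Set (V × V)} (hE0 : E0 ⊆ PV V) (hE1 : E1 ⊆ PV V)
    (hne : (completions E0 E1).Nonempty) :
    maxSpecific (cl0 E0 E1) (cl1 E1) := by
  have hcc := completions_cl hE0 hE1 (V := V)
  ext e
  constructor
  · rintro ⟨hePV, hdec⟩
    by_contra hcon
    simp only [Set.mem_union] at hcon
    push_neg at hcon
    obtain ⟨h0, h1⟩ := hcon
    -- minimal completion: value 0 at e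
    have hx0 : ind (reach E1) ∈ completions (cl0 E0 E1) (cl1 E1) := by
      rw [hcc]; exact ind_reach_mem hne
    -- joined completion: value 1 at e
    set R : V → V → Prop :=
      fun a b => reach E1 a b ∨ (reach E1 a e.1 ∧ reach E1 e.2 b) with hR
    have hRrefl : ∀ a, R a a := fun a => Or.inl .refl
    have hRtrans : ∀ a b c, R a b → R b c → R a c := by
      rintro a b c (hab | ⟨ha, hb⟩) (hbc | ⟨hc, hd⟩)
      · exact Or.inl (hab.trans hbc)
      · exact Or.inr ⟨hab.trans hc, hd⟩
      · exact Or.inr ⟨ha, hb.trans hbc⟩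
      · exact Or.inr ⟨ha, hd⟩
    have hx1 : ind R ∈ completions (cl0 E0 E1) (cl1 E1) := by
      rw [hcc]
      refine ⟨ind_mem_XV hRrefl hRtrans, fun e' he' => ?_, fun e' he' => ?_⟩
      · refine if_neg ?_
        rintro (h | ⟨ha, hb⟩)
        · exact not_reach_E0 hne he' h
        · exact h0 ⟨hePV, e', he', ha, hb⟩
      · exact if_pos (Or.inl (Relation.ReflTransGen.single he'))
    have hv0 : ind (reach E1) e = 0 := by
      refine if_neg fun h => h1 ⟨hePV, h⟩
    have hv1 : ind R e = 1 := if_pos (Or.inr ⟨.refl, .refl⟩)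
    have := hdec _ hx0 _ hx1
    rw [hv0, hv1] at this
    norm_num at this
  · intro he
    rcases he with he | he
    · exact ⟨he.1, fun x hx x' hx' => by
        rw [hx.2.1 e he, hx'.2.1 e he]⟩
    · exact ⟨he.1, fun x hx x' hx' => by
        rw [hx.2.2 e he, hx'.2.2 e he]⟩

end helpers

/-- `cl(x̃)` is the unique maximally specific partial characteristic function
with the same completions as `x̃`. -/
theorem stmt4 {V : Type*} [Fintype V] [Nonempty V]
    (E0 E1 : Set (V × V)) (hE0 : E0 ⊆ PV V) (hE1 : E1 ⊆ PV V)
    (hdisj : Disjoint E0 E1)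
    (hne : (completions E0 E1).Nonempty) :
    maxSpecific (cl0 E0 E1) (cl1 E1) ∧
    completions (cl0 E0 E1) (cl1 E1) = completions E0 E1 ∧
    (∀ E0' E1' : Set (V × V), E0' ⊆ PV V → E1' ⊆ PV V → Disjoint E0' E1' →
      maxSpecific E0' E1' → completions E0' E1' = completions E0 E1 →
      E0' = cl0 E0 E1 ∧ E1' = cl1 E1) := by
  have hcc := completions_cl hE0 hE1 (V := V)
  have hms := maxSpecific_cl hE0 hE1 hne
  refine ⟨hms, hcc, fun E0' E1' hE0' hE1' hdisj' hms' hcomp' => ?_⟩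
  obtain ⟨y, hy⟩ := hne
  have hy' : y ∈ completions E0' E1' := by rw [hcomp']; exact hy
  -- decided sets coincide
  have hdec : ∀ pq, decidedPair E0' E1' pq ↔ decidedPair (cl0 E0 E1) (cl1 E1) pq := by
    intro pq
    unfold decidedPair
    rw [hcomp', hcc]
  have hunion : E0' ∪ E1' = cl0 E0 E1 ∪ cl1 E1 := by
    rw [← hms', ← hms]
    ext pq
    simp only [Set.mem_setOf_eq, hdec]
  have h10 : ∀ e ∈ E1', e ∉ cl0 E0 E1 := by
    intro e he hc
    have h1 : y e = 1 := hy'.2.2 e he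
    have h0 : y e = 0 := mem_cl0_zero hy hc
    norm_num [h0] at h1
  have h01 : ∀ e ∈ E0', e ∉ cl1 E1 := by
    intro e he hc
    have h0 : y e = 0 := hy'.2.1 e he
    have h1 : y e = 1 := mem_cl1_one hy hc
    norm_num [h0] at h1
  have hc10 : ∀ e ∈ cl1 E1, e ∉ E0' := fun e he hc => h01 e hc he
  have hc01 : ∀ e ∈ cl0 E0 E1, e ∉ E1' := fun e he hc => h10 e hc he
  constructor
  · ext e
    constructor
    · intro he
      have : e ∈ cl0 E0 E1 ∪ cl1 E1 := hunion ▸ Or.inl he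
      rcases this with h | h
      · exact h
      · exact absurd he (h01 e he h).elim
    · intro he
      have : e ∈ E0' ∪ E1' := hunion ▸ Or.inl he
      rcases this with h | h
      · exact h
      · exact absurd h (hc01 e he)
  · ext e
    constructor
    · intro he
      have : e ∈ cl0 E0 E1 ∪ cl1 E1 := hunion ▸ Or.inr he
      rcases this with h | h
      · exact absurd he (hc01 e h)
      · exact h
    · intro he
      have : e ∈ E0' ∪ E1' := hunion ▸ Or.inr he
      rcases this with h | h
      · exact absurd h (hc10 e he)
      · exact h
end

section
/- Let V be a finite nonempty set, c : P_V → ℝ, x̂ ∈ X̂_V, U ⊆ V, x̂' := x̂ restricted to P_U, c' := c restricted to P_U, ij ∈ P_U \ dom(x̂) and b ∈ {0,1}. Let y be a maximizer of φ_{c'} over {x' ∈ X_U[x̂'] : x'_{ij} = b}, and let τ : X_V[x̂] → X_V[x̂] be a map such that for every x ∈ X_V[x̂], τ(x) agrees with x on P_{V\U} and τ(x) restricted to P_U equals y. Let lb ∈ ℝ with lb ≤ max{φ_{c'}(x) : x ∈ X_U[x̂'], x_{ij} = b}, ub ∈ ℝ with ub ≥ max{φ_{c'}(x) : x ∈ X_U[x̂'],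 x_{ij} = 1−b}, and ub' ∈ ℝ with ub' ≥ max{Σ_{pq ∈ δ(U)} c_{pq}(x_{pq} − τ(x)_{pq}) : x ∈ X_V[x̂], x_{ij} = 1−b}. If lb − ub ≥ ub', then there exists a maximizer x* of φ_c over X_V[x̂] with x*_{ij} = b. -/
open scoped Classical

lemma completions_finite {V : Type*} [Finite V] (E0 E1 : Set (V × V)) :
    (completions E0 E1).Finite := by
  apply Set.Finite.subset
    (Set.Finite.pi (fun _ : V × V => (Set.finite_singleton (1 : ℝ)).insert 0))
  intro x hx
  simp only [Set.mem_univ_pi]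
  intro pq
  rcases eq_or_ne pq.1 pq.2 with h | h
  · have h1 := hx.1.1 pq.1
    have hpq : pq = (pq.1, pq.1) := by
      rw [Prod.ext_iff]; exact ⟨rfl, h.symm⟩
    rw [hpq, h1]
    simp
  · rcases hx.1.2.1 pq h with h0 | h0 <;> simp [h0]

/-- Fixation condition (Proposition 16 of the paper). -/
theorem stmt14 {V : Type*} [Fintype V] [Nonempty V]
    (E0 E1 : Set (V × V)) (hE0 : E0 ⊆ PV V) (hE1 : E1 ⊆ PV V)
    (hdisj : Disjoint E0 E1)
    (hne : (completions E0 E1).Nonempty)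
    (hms : maxSpecific E0 E1)
    (c : V × V → ℝ) (U : Set V)
    (i j : V) (hi : i ∈ U) (hj : j ∈ U) (hij : i ≠ j)
    (hdom : (i, j) ∉ E0 ∪ E1)
    (b : ℝ) (hb : b = 0 ∨ b = 1)
    (y : ↥U × ↥U → ℝ)
    (hymem : y ∈ completions (resSet U E0) (resSet U E1))
    (hyb : y (⟨i, hi⟩, ⟨j, hj⟩) = b)
    (hymax : ∀ z ∈ completions (resSet U E0) (resSet U E1), z (⟨i, hi⟩, ⟨j, hj⟩) = b →
      phi (fun pq : ↥U × ↥U => c (↑pq.1, ↑pq.2)) z ≤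
        phi (fun pq : ↥U × ↥U => c (↑pq.1, ↑pq.2)) y)
    (tau : (V × V → ℝ) → (V × V → ℝ))
    (htaumem : ∀ x ∈ completions E0 E1, tau x ∈ completions E0 E1)
    (htauout : ∀ x ∈ completions E0 E1, ∀ pq : V × V,
      pq.1 ∉ U → pq.2 ∉ U → tau x pq = x pq)
    (htauin : ∀ x ∈ completions E0 E1, ∀ pq : ↥U × ↥U, tau x (↑pq.1, ↑pq.2) = y pq)
    (lb ub ub' : ℝ)
    (hlb : lb ≤ sSup ((phi (fun pq : ↥U × ↥U => c (↑pq.1, ↑pq.2))) ''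
      {z ∈ completions (resSet U E0) (resSet U E1) | z (⟨i, hi⟩, ⟨j, hj⟩) = b}))
    (hub : ub ≥ sSup ((phi (fun pq : ↥U × ↥U => c (↑pq.1, ↑pq.2))) ''
      {z ∈ completions (resSet U E0) (resSet U E1) | z (⟨i, hi⟩, ⟨j, hj⟩) = 1 - b}))
    (hub' : ub' ≥ sSup ((fun x : V × V → ℝ => ∑ pq ∈ Finset.univ.filter
        (fun pq : V × V => (pq.1 ∈ U ∧ pq.2 ∉ U) ∨ (pq.1 ∉ U ∧ pq.2 ∈ U)),
        c pq * (x pq - tau x pq)) '' {x ∈ completions E0 E1 | x (i, j) = 1 - b}))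
    (hbound : lb - ub ≥ ub') :
    ∃ xs ∈ completions E0 E1,
      (∀ x ∈ completions E0 E1, phi c x ≤ phi c xs) ∧ xs (i, j) = b := by
  classical
  have hfinV : (completions E0 E1).Finite := completions_finite E0 E1
  have hfinU : (completions (resSet U E0) (resSet U E1)).Finite := completions_finite _ _
  obtain ⟨xs, hxs, hxsmax⟩ := Set.exists_max_image _ (phi c) hfinV hne
  by_cases hxb : xs (i, j) = b
  · exact ⟨xs, hxs, hxsmax, hxb⟩
  have hxs1b : xs (i, j) = 1 - b := by
    rcases hxs.1.2.1 (i, j) hij with h0 | h1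
    · rcases hb with rfl | rfl
      · exact absurd h0 hxb
      · rw [h0]; norm_num
    · rcases hb with rfl | rfl
      · rw [h1]; norm_num
      · exact absurd h1 hxb
  set xt := tau xs with hxtdef
  have hxtmem : xt ∈ completions E0 E1 := htaumem xs hxs
  have hxtb : xt (i, j) = b := by
    have h := htauin xs hxs (⟨i, hi⟩, ⟨j, hj⟩)
    rw [hyb] at h
    exact h
  set c' : ↥U × ↥U → ℝ := fun pq => c (↑pq.1, ↑pq.2) with hc'
  set z : ↥U × ↥U → ℝ := fun pq => xs (↑pq.1, ↑pq.2) with hzdef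
  have hzmem : z ∈ completions (resSet U E0) (resSet U E1) := by
    refine ⟨⟨fun a => hxs.1.1 a, fun pq hpq => ?_, fun p q r hpq hpr hqr => ?_⟩,
      fun e he => hxs.2.1 _ he, fun e he => hxs.2.2 _ he⟩
    · exact hxs.1.2.1 (↑pq.1, ↑pq.2) (fun hc => hpq (Subtype.ext hc))
    · exact hxs.1.2.2 ↑p ↑q ↑r (fun h => hpq (Subtype.ext h)) (fun h => hpr (Subtype.ext h))
        (fun h => hqr (Subtype.ext h))
  have hzb : z (⟨i, hi⟩, ⟨j, hj⟩) = 1 - b := hxs1b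
  -- bounds
  have hzub : phi c' z ≤ ub := by
    refine le_trans (le_csSup ?_ ?_) hub
    · exact ((hfinU.subset (Set.sep_subset _ _)).image _).bddAbove
    · exact ⟨z, ⟨hzmem, hzb⟩, rfl⟩
  have hylb : lb ≤ phi c' y := by
    refine le_trans hlb (csSup_le ⟨_, Set.mem_image_of_mem _ ⟨hymem, hyb⟩⟩ ?_)
    rintro v ⟨w, ⟨hw1, hw2⟩, rfl⟩
    exact hymax w hw1 hw2
  have hcross : (∑ pq ∈ Finset.univ.filter
      (fun pq : V × V => (pq.1 ∈ U ∧ pq.2 ∉ U) ∨ (pq.1 ∉ U ∧ pq.2 ∈ U)),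
      c pq * (xs pq - tau xs pq)) ≤ ub' := by
    refine le_trans (le_csSup ?_ ?_) hub'
    · exact ((hfinV.subset (Set.sep_subset _ _)).image _).bddAbove
    · exact ⟨xs, ⟨hxs, hxs1b⟩, rfl⟩
  -- decomposition of the objective difference
  set D : V × V → ℝ := fun pq => c pq * (xs pq - xt pq) with hDdef
  have hdiff : phi c xs - phi c xt = ∑ pq ∈ Finset.univ.filter
      (fun pq : V × V => pq.1 ≠ pq.2), D pq := by
    rw [phi, phi, ← Finset.sum_sub_distrib]
    exact Finset.sum_congr rfl (fun pq _ => by rw [hDdef]; ring)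
  have hsplit1 := Finset.sum_filter_add_sum_filter_not
    (Finset.univ.filter (fun pq : V × V => pq.1 ≠ pq.2))
    (fun pq : V × V => pq.1 ∈ U ∧ pq.2 ∈ U) D
  have hsplit2 := Finset.sum_filter_add_sum_filter_not
    ((Finset.univ.filter (fun pq : V × V => pq.1 ≠ pq.2)).filter
      (fun pq : V × V => ¬(pq.1 ∈ U ∧ pq.2 ∈ U)))
    (fun pq : V × V => (pq.1 ∈ U ∧ pq.2 ∉ U) ∨ (pq.1 ∉ U ∧ pq.2 ∈ U)) D
  -- the "both outside" part vanishes
  have hout : ∑ pq ∈ ((Finset.univ.filter (fun pq : V × V => pq.1 ≠ pq.2)).filter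
      (fun pq : V × V => ¬(pq.1 ∈ U ∧ pq.2 ∈ U))).filter
      (fun pq : V × V => ¬((pq.1 ∈ U ∧ pq.2 ∉ U) ∨ (pq.1 ∉ U ∧ pq.2 ∈ U))), D pq = 0 := by
    refine Finset.sum_eq_zero (fun pq hpq => ?_)
    simp only [Finset.mem_filter] at hpq
    obtain ⟨⟨-, hnin⟩, hncross⟩ := hpq
    push_neg at hncross
    have h1 : pq.1 ∉ U := by tauto
    have h2 : pq.2 ∉ U := by tauto
    have := htauout xs hxs pq h1 h2
    rw [hDdef]
    simp only [← hxtdef] at this ⊢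
    rw [this]
    ring
  -- the cross part equals the cross sum
  have hcrossset : ((Finset.univ.filter (fun pq : V × V => pq.1 ≠ pq.2)).filter
      (fun pq : V × V => ¬(pq.1 ∈ U ∧ pq.2 ∈ U))).filter
      (fun pq : V × V => (pq.1 ∈ U ∧ pq.2 ∉ U) ∨ (pq.1 ∉ U ∧ pq.2 ∈ U)) =
      Finset.univ.filter
      (fun pq : V × V => (pq.1 ∈ U ∧ pq.2 ∉ U) ∨ (pq.1 ∉ U ∧ pq.2 ∈ U)) := by
    ext pq
    simp only [Finset.mem_filter, Finset.mem_univ, true_and]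
    constructor
    · tauto
    · intro h
      have hne2 : pq.1 ≠ pq.2 := by
        intro heq
        rcases h with ⟨h1, h2⟩ | ⟨h1, h2⟩
        · exact h2 (heq ▸ h1)
        · exact h1 (heq ▸ h2)
      exact ⟨⟨hne2, by tauto⟩, h⟩
  -- the inside part equals the difference of restricted objectives
  have hin : ∑ pq ∈ (Finset.univ.filter (fun pq : V × V => pq.1 ≠ pq.2)).filter
      (fun pq : V × V => pq.1 ∈ U ∧ pq.2 ∈ U), D pq = phi c' z - phi c' y := by
    rw [phi, phi, ← Finset.sum_sub_distrib]
    refine (Finset.sum_bij'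
      (i := fun (a : V × V) (ha : a ∈ _) =>
        ((⟨a.1, ((Finset.mem_filter.mp ha).2).1⟩ : ↥U), (⟨a.2, ((Finset.mem_filter.mp ha).2).2⟩ : ↥U)))
      (j := fun (e : ↥U × ↥U) _ => ((↑e.1 : V), (↑e.2 : V)))
      ?_ ?_ ?_ ?_ ?_)
    · intro a ha
      simp only [Finset.mem_filter, Finset.mem_univ, true_and] at ha ⊢
      exact fun h => ha.1 (congrArg Subtype.val h)
    · intro e he
      simp only [Finset.mem_filter, Finset.mem_univ, true_and] at he ⊢
      exact ⟨fun h => he (Subtype.ext h), e.1.2, e.2.2⟩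
    · intro a ha; rfl
    · intro e he; rfl
    · intro a ha
      have hmem := (Finset.mem_filter.mp ha).2
      have h1 : xt a = y (⟨a.1, hmem.1⟩, ⟨a.2, hmem.2⟩) :=
        htauin xs hxs (⟨a.1, hmem.1⟩, ⟨a.2, hmem.2⟩)
      simp only [hDdef, hc', hzdef, h1]
      ring
  have hfinal : phi c xs - phi c xt ≤ (ub - lb) + ub' := by
    rw [hdiff, ← hsplit1, ← hsplit2, hout, hcrossset, hin, add_zero]
    have : (∑ pq ∈ Finset.univ.filter
        (fun pq : V × V => (pq.1 ∈ U ∧ pq.2 ∉ U) ∨ (pq.1 ∉ U ∧ pq.2 ∈ U)), D pq) ≤ ub' := by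
      rw [hDdef]
      simpa only [← hxtdef] using hcross
    have h2 : phi c' z - phi c' y ≤ ub - lb := by linarith
    linarith
  refine ⟨xt, hxtmem, fun x hx => ?_, hxtb⟩
  have := hxsmax x hx
  have : phi c xs ≤ phi c xt := by linarith
  linarith [hxsmax x hx]
end
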